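/- arXiv:2002.03835 — 3 statements merged into one kernel-verified Lean document; each statement's English description precedes it below -/
import Mathlib

section
/- Let q : E → B be a covering map of topological spaces. Equip the spaces C([0,∞), E) and C([0,∞), B) of continuous paths with the compact-open topology. Then the map Φ : C([0,∞), E) → {(x, ω) ∈ E × C([0,∞), B) : q(x) = ω(0)} defined by Φ(ω̃) = (ω̃(0), q ∘ ω̃) is a homeomorphism onto the subspace {(x, ω) : q(x) = ω(0)} of E × C([0,∞), B); equivalently, every continuous path ω : [0,∞) → B with ω(0) = q(x) has a unique continuous lift ω_x through q starting at x, and the resulting lifting map H(x, ω) = ω_x is a homeomorphism inverse to Φ. -/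
open NNReal unitInterval

/-! Lifting the homotopy `(s, (a, t)) ↦ F (a, s * t)`, which contracts every path to its
starting point, and evaluating the lift at `s = 1` lifts a whole family of paths over `ℝ≥0` at
once, continuously in the parameter. Applied to the family of all pairs `(x, ω)` with
`q x = ω 0`, this gives a lifting map that is jointly continuous, hence continuous into the
compact-open topology; uniqueness of lifts makes it inverse to `Φ`. -/

theorem IsCoveringMap.exists_lift_prod_nnreal {E B A : Type*} [TopologicalSpace E]
    [TopologicalSpace B] [TopologicalSpace A] {q : E → B} (hq : IsCoveringMap q)
    (F : C(A × ℝ≥0, B)) (f : C(A, E)) (hF : ∀ a, F (a, 0) = q (f a)) :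
    ∃ G : C(A × ℝ≥0, E), q ∘ G = F ∧ ∀ a, G (a, 0) = f a := by
  let K : C(I × (A × ℝ≥0), B) := ⟨fun z => F (z.2.1, toNNReal z.1 * z.2.2), by fun_prop⟩
  have hK : ∀ z, K (0, z) = q (f z.1) := fun z => by simp [K, hF]
  let L := hq.liftHomotopy K (f.comp ⟨Prod.fst, continuous_fst⟩) hK
  have hL : ∀ s z, q (L (s, z)) = F (z.1, toNNReal s * z.2) := fun s z =>
    congrFun (hq.liftHomotopy_lifts K _ hK) (s, z)
  refine ⟨L.comp ⟨fun z => (1, z), by fun_prop⟩, ?_, fun a => ?_⟩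
  · ext z
    simpa using hL 1 z
  · have hconst : (fun s : I => L (s, (a, 0))) = fun _ => f a := by
      refine hq.eq_of_comp_eq (by fun_prop) continuous_const ?_ 0 (hq.liftHomotopy_zero ..)
      ext s
      simpa [hF] using hL s (a, 0)
    exact congrFun hconst 1

/-- For a covering map `q : E → B`, the map
`Φ : C([0,∞), E) → {(x, ω) : q x = ω 0}`, `Φ ω̃ = (ω̃ 0, q ∘ ω̃)`, is a
homeomorphism onto the subspace `{(x, ω) ∈ E × C([0,∞), B) : q x = ω 0}`
(with respect to the compact-open topologies); equivalently, unique path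
lifting holds and the lifting map is a homeomorphism inverse to `Φ`. -/
theorem stmt11 {E B : Type*} [TopologicalSpace E] [TopologicalSpace B]
    (q : E → B) (hq : IsCoveringMap q) :
    ∃ Φ : C(ℝ≥0, E) ≃ₜ {p : E × C(ℝ≥0, B) // q p.1 = p.2 0},
      ∀ ω : C(ℝ≥0, E),
        (Φ ω : E × C(ℝ≥0, B)) =
          (ω 0, ContinuousMap.comp ⟨q, hq.continuous⟩ ω) := by
  obtain ⟨G, hG_lifts, hG_zero⟩ := hq.exists_lift_prod_nnreal
    (A := {p : E × C(ℝ≥0, B) // q p.1 = p.2 0})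
    ⟨fun z => z.1.1.2 z.2, by fun_prop⟩ ⟨fun p => p.1.1, by fun_prop⟩ fun p => p.2.symm
  refine ⟨{ toFun := fun ω => ⟨(ω 0, ContinuousMap.comp ⟨q, hq.continuous⟩ ω), rfl⟩
            invFun := G.curry
            left_inv := fun ω => ?_
            right_inv := fun p => ?_
            continuous_toFun := by fun_prop
            continuous_invFun := G.curry.continuous }, fun ω => rfl⟩
  · refine DFunLike.coe_injective (hq.eq_of_comp_eq (G.curry _).continuous ω.continuous ?_ 0 ?_)
    · exact funext fun t => congrFun hG_lifts _
    · exact hG_zero _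
  · exact Subtype.ext (Prod.ext (hG_zero p) (ContinuousMap.ext fun t => congrFun hG_lifts (p, t)))
end

section
/- Let k ≥ 1 and d ≥ 0 be integers. Every element of 𝒫^d(ℤ^k) (polynomials of degree at most d on the group ℤ^k in the finite-difference sense) is the restriction to ℤ^k ⊆ ℝ^k of a real polynomial function in k variables of total degree at most d, and this polynomial is unique. Consequently, restriction to ℤ^k defines a linear isomorphism from the space of real polynomial functions on ℝ^k of total degree at most d onto 𝒫^d(ℤ^k). -/
/-- The (additive) partial derivative `∂_g f (h) = f (g + h) - f h` for
functions on the group `ℤ^k`. -/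
def pd (k : ℕ) (g : Fin k → ℤ) (f : (Fin k → ℤ) → ℝ) : (Fin k → ℤ) → ℝ :=
  fun h => f (g + h) - f h

/-- Iterated partial derivatives along a list of group elements. -/
def iterDeriv (k : ℕ) : List (Fin k → ℤ) → ((Fin k → ℤ) → ℝ) → ((Fin k → ℤ) → ℝ)
  | [], f => f
  | g :: l, f => pd k g (iterDeriv k l f)

/-- `f ∈ 𝒫^d(ℤ^k)`: all iterated partial derivatives of order `d + 1`
vanish. -/
def IsPolyDeg (k d : ℕ) (f : (Fin k → ℤ) → ℝ) : Prop :=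
  ∀ l : List (Fin k → ℤ), l.length = d + 1 → iterDeriv k l f = 0

/-!
Restriction to `ℤ^k` is injective on polynomials, since a polynomial vanishing on a product of
infinite sets is zero. Polynomials of total degree `≤ d` restrict into `𝒫^d(ℤ^k)`: coordinates lie
in `𝒫^1`, and the discrete Leibniz rule `Δ(fg) = Δf·g + f·Δg + Δf·Δg` gives
`𝒫^a · 𝒫^b ⊆ 𝒫^(a+b)`. Conversely, for `f ∈ 𝒫^d(ℤ^(k+1))`, Newton's forward difference formula
along the first coordinate gives `f (t, y) = ∑_{n ≤ d} (t choose n) · (Δ_{e₀}^n f) (0, y)`, whose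
coefficients lie in `𝒫^(d-n)(ℤ^k)` and are polynomials of degree `≤ d - n` by induction on `k`.
-/

open MvPolynomial Finset fwdDiff

lemma eq_apply_zero_of_fwdDiff_eq_zero {G : Type*} [AddCommGroup G] {φ : ℤ → G}
    (h : Δ_[1] φ = 0) (t : ℤ) : φ t = φ 0 := by
  have step (s : ℤ) : φ (s + 1) = φ s := sub_eq_zero.mp (congrFun h s)
  induction t using Int.induction_on with
  | zero => rfl
  | succ n ih => rw [step, ih]
  | pred n ih => rw [← ih, ← step, sub_add_cancel]

lemma fwdDiff_comp_add_zsmul {M G : Type*} [AddCommGroup M] [AddCommGroup G] (f : M → G)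
    (x v : M) : Δ_[1] (fun t : ℤ => f (x + t • v)) = fun t => Δ_[v] f (x + t • v) := by
  funext t
  simp only [fwdDiff, add_smul, one_smul, add_assoc]

lemma fwdDiff_sum_choose_smul {G : Type*} [AddCommGroup G] (a : ℕ → G) (m : ℕ) :
    Δ_[1] (fun t : ℤ => ∑ n ∈ range (m + 1), Ring.choose t n • a n)
      = fun t => ∑ n ∈ range m, Ring.choose t n • a (n + 1) := by
  funext t
  simp only [fwdDiff, ← sum_sub_distrib, ← sub_smul]
  rw [sum_range_succ']
  simp [Ring.choose_succ_succ]

theorem shift_zsmul_eq_sum_choose_smul_fwdDiff_iter {M G : Type*} [AddCommGroup M]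
    [AddCommGroup G] {v : M} {f : M → G} {d : ℕ} (h : (Δ_[v])^[d + 1] f = 0) (x : M) (t : ℤ) :
    f (x + t • v) = ∑ n ∈ range (d + 1), Ring.choose t n • (Δ_[v])^[n] f x := by
  induction d generalizing f t with
  | zero =>
    have hline := eq_apply_zero_of_fwdDiff_eq_zero
      ((fwdDiff_comp_add_zsmul f x v).trans (funext fun s => congrFun h _)) t
    simpa [Ring.choose_zero_right] using hline
  | succ d ih =>
    set S := fun t : ℤ => ∑ n ∈ range (d + 2), Ring.choose t n • (Δ_[v])^[n] f x
    have hS : Δ_[1] S = Δ_[1] (fun t : ℤ => f (x + t • v)) := by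
      rw [fwdDiff_sum_choose_smul, fwdDiff_comp_add_zsmul]
      funext s
      rw [ih (f := Δ_[v] f) h s]
      simp only [Function.iterate_succ_apply]
    have hconst : Δ_[1] (fun t : ℤ => f (x + t • v) - S t) = 0 := by
      funext s
      simp only [fwdDiff, Pi.zero_apply, sub_sub_sub_comm]
      exact sub_eq_zero.mpr (congrFun hS s).symm
    have hS0 : S 0 = f x := by simp [S, sum_range_succ']
    have := eq_apply_zero_of_fwdDiff_eq_zero hconst t
    simp only [zero_smul, add_zero, hS0, sub_self] at this
    exact sub_eq_zero.mp this

lemma totalDegree_smeval_X_le {σ : Type*} (p : Polynomial ℤ) (i : σ) :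
    (p.smeval (X i : MvPolynomial σ ℝ)).totalDegree ≤ p.natDegree := by
  rw [Polynomial.smeval_eq_sum, Polynomial.sum_def]
  refine totalDegree_finsetSum_le fun m hm => ?_
  calc (p.coeff m • (X i : MvPolynomial σ ℝ) ^ m).totalDegree
      ≤ (X i ^ m : MvPolynomial σ ℝ).totalDegree := totalDegree_smul_le _ _
    _ ≤ p.natDegree :=
        (totalDegree_X_pow i m).trans_le (Polynomial.le_natDegree_of_mem_supp m hm)

lemma totalDegree_choose_X_le {σ : Type*} (i : σ) (n : ℕ) :
    (Ring.choose (X i : MvPolynomial σ ℝ) n).totalDegree ≤ n := by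
  have hn : (n.factorial : ℝ) ≠ 0 := by positivity
  set B := Ring.choose (X i : MvPolynomial σ ℝ) n
  calc B.totalDegree = ((n.factorial : ℝ)⁻¹ • n.factorial • B).totalDegree := by
        rw [← Nat.cast_smul_eq_nsmul ℝ, inv_smul_smul₀ hn]
    _ ≤ (n.factorial • B).totalDegree := totalDegree_smul_le _ _
    _ ≤ (descPochhammer ℤ n).natDegree := by
        rw [← Ring.descPochhammer_eq_factorial_smul_choose]; exact totalDegree_smeval_X_le _ i
    _ = n := descPochhammer_natDegree ℤ n

section FiniteDifferences

variable {k : ℕ}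

lemma pd_eq_fwdDiff (g : Fin k → ℤ) (f : (Fin k → ℤ) → ℝ) : pd k g f = Δ_[g] f :=
  funext fun h => by rw [pd, fwdDiff, add_comm]

lemma iterDeriv_append (l₁ l₂ : List (Fin k → ℤ)) (f : (Fin k → ℤ) → ℝ) :
    iterDeriv k (l₁ ++ l₂) f = iterDeriv k l₁ (iterDeriv k l₂ f) := by
  induction l₁ with
  | nil => rfl
  | cons g l ih => rw [List.cons_append, iterDeriv, ih, iterDeriv]

lemma iterDeriv_replicate (n : ℕ) (g : Fin k → ℤ) (f : (Fin k → ℤ) → ℝ) :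
    iterDeriv k (List.replicate n g) f = (Δ_[g])^[n] f := by
  induction n with
  | zero => rfl
  | succ n ih =>
    rw [List.replicate_succ, iterDeriv, ih, pd_eq_fwdDiff, Function.iterate_succ_apply']

lemma iterDeriv_add (l : List (Fin k → ℤ)) (f₁ f₂ : (Fin k → ℤ) → ℝ) :
    iterDeriv k l (f₁ + f₂) = iterDeriv k l f₁ + iterDeriv k l f₂ := by
  induction l with
  | nil => rfl
  | cons g l ih => simp only [iterDeriv, ih, pd_eq_fwdDiff, fwdDiff_add]

lemma iterDeriv_smul (l : List (Fin k → ℤ)) (c : ℝ) (f : (Fin k → ℤ) → ℝ) :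
    iterDeriv k l (c • f) = c • iterDeriv k l f := by
  induction l with
  | nil => rfl
  | cons g l ih => simp only [iterDeriv, ih, pd_eq_fwdDiff, fwdDiff_const_smul]

lemma iterDeriv_comp_addMonoidHom {m : ℕ} (ψ : (Fin k → ℤ) →+ (Fin m → ℤ))
    (l : List (Fin k → ℤ)) (f : (Fin m → ℤ) → ℝ) :
    iterDeriv k l (f ∘ ψ) = iterDeriv m (l.map ψ) f ∘ ψ := by
  induction l with
  | nil => rfl
  | cons g l ih => funext x; simp only [iterDeriv, ih, List.map_cons, pd, Function.comp, map_add]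

def polyDeg (k d : ℕ) : Submodule ℝ ((Fin k → ℤ) → ℝ) where
  carrier := {f | IsPolyDeg k d f}
  zero_mem' l _ := by simpa using iterDeriv_smul l 0 0
  add_mem' hf₁ hf₂ l hl := by simp [iterDeriv_add, hf₁ l hl, hf₂ l hl]
  smul_mem' c _ hf l hl := by simp [iterDeriv_smul, hf l hl]

lemma mem_polyDeg {d : ℕ} {f : (Fin k → ℤ) → ℝ} : f ∈ polyDeg k d ↔ IsPolyDeg k d f := Iff.rfl

namespace IsPolyDeg

variable {d : ℕ} {f : (Fin k → ℤ) → ℝ}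

lemma iterDeriv_eq_zero (hf : IsPolyDeg k d f) {l : List (Fin k → ℤ)} (hl : d < l.length) :
    iterDeriv k l f = 0 := by
  rw [← List.take_append_drop (l.length - (d + 1)) l, iterDeriv_append,
    hf _ (by simp; omega)]
  simpa using iterDeriv_smul (l.take (l.length - (d + 1))) 0 0

lemma iterDeriv (hf : IsPolyDeg k d f) (l : List (Fin k → ℤ)) :
    IsPolyDeg k (d - l.length) (_root_.iterDeriv k l f) := fun l' hl' => by
  rw [← iterDeriv_append]
  exact hf.iterDeriv_eq_zero (by simp; omega)

lemma mono (hf : IsPolyDeg k d f) {e : ℕ} (hde : d ≤ e) : IsPolyDeg k e f :=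
  fun _ hl => hf.iterDeriv_eq_zero (by omega)

lemma comp_addMonoidHom {m : ℕ} {f : (Fin m → ℤ) → ℝ} (hf : IsPolyDeg m d f)
    (ψ : (Fin k → ℤ) →+ (Fin m → ℤ)) : IsPolyDeg k d (f ∘ ψ) := fun l hl => by
  rw [iterDeriv_comp_addMonoidHom, hf _ (by simpa using hl)]
  rfl

lemma eq_const (hf : IsPolyDeg k 0 f) : f = fun _ => f 0 := by
  funext x
  simpa [_root_.iterDeriv, pd, sub_eq_zero] using congrFun (hf [x] rfl) 0

end IsPolyDeg

lemma isPolyDeg_const (d : ℕ) (c : ℝ) : IsPolyDeg k d (fun _ => c) :=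
  IsPolyDeg.mono (fun l hl => by
    obtain ⟨g, rfl⟩ := List.length_eq_one_iff.mp hl
    funext x; simp [iterDeriv, pd]) (Nat.zero_le d)

lemma isPolyDeg_succ_iff {d : ℕ} {f : (Fin k → ℤ) → ℝ} :
    IsPolyDeg k (d + 1) f ↔ ∀ g, IsPolyDeg k d (pd k g f) := by
  refine ⟨fun hf g l hl => ?_, fun h l hl => ?_⟩
  · rw [← hf (l ++ [g]) (by simp [hl]), iterDeriv_append]
    rfl
  · have hne : l ≠ [] := List.ne_nil_of_length_pos (by omega)
    rw [← List.dropLast_append_getLast hne, iterDeriv_append]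
    exact h _ _ (by simp [hl])

lemma isPolyDeg_coord (i : Fin k) : IsPolyDeg k 1 (fun x => (x i : ℝ)) :=
  isPolyDeg_succ_iff.2 fun g => by
    convert isPolyDeg_const 0 (g i : ℝ) using 1
    funext x
    simp [pd]

namespace IsPolyDeg

variable {a b : ℕ} {f g : (Fin k → ℤ) → ℝ}

lemma mul (hf : IsPolyDeg k a f) (hg : IsPolyDeg k b g) : IsPolyDeg k (a + b) (f * g) := by
  induction a generalizing b f g with
  | zero =>
    rw [hf.eq_const, zero_add]
    exact (polyDeg k b).smul_mem (f 0) hg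
  | succ a iha =>
    induction b generalizing g with
    | zero =>
      rw [hg.eq_const, add_zero, mul_comm]
      exact (polyDeg k (a + 1)).smul_mem (g 0) hf
    | succ b ihb =>
      rw [show a + 1 + (b + 1) = a + b + 1 + 1 by ring, isPolyDeg_succ_iff]
      intro v
      have hfv := isPolyDeg_succ_iff.1 hf v
      have hgv := isPolyDeg_succ_iff.1 hg v
      rw [pd_eq_fwdDiff] at hfv hgv ⊢
      have hprod : Δ_[v] (f * g) = Δ_[v] f * g + f * Δ_[v] g + Δ_[v] f * Δ_[v] g :=
        fwdDiff_smul v f g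
      rw [hprod, ← mem_polyDeg]
      refine add_mem (add_mem ?_ ?_) ((iha hfv hgv).mono (Nat.le_succ _))
      · exact (iha hfv hg).mono (by omega)
      · exact (ihb hgv).mono (by omega)

lemma pow (hf : IsPolyDeg k a f) (n : ℕ) : IsPolyDeg k (n * a) (f ^ n) := by
  induction n with
  | zero => rw [zero_mul, pow_zero]; exact isPolyDeg_const 0 1
  | succ n ih => simpa [pow_succ, add_mul] using ih.mul hf

lemma prod {ι : Type*} (s : Finset ι) {d : ι → ℕ} {f : ι → (Fin k → ℤ) → ℝ}
    (hf : ∀ i ∈ s, IsPolyDeg k (d i) (f i)) : IsPolyDeg k (∑ i ∈ s, d i) (∏ i ∈ s, f i) := by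
  classical
  induction s using Finset.induction_on with
  | empty => rw [sum_empty, prod_empty]; exact isPolyDeg_const 0 1
  | insert i s hi ih =>
    rw [sum_insert hi, prod_insert hi]
    exact (hf i (mem_insert_self i s)).mul (ih fun j hj => hf j (mem_insert_of_mem hj))

end IsPolyDeg

end FiniteDifferences

section LatticeEval

noncomputable def latticeEval (σ : Type*) : MvPolynomial σ ℝ →ₗ[ℝ] ((σ → ℤ) → ℝ) :=
  LinearMap.pi fun x => (aeval fun i => (x i : ℝ)).toLinearMap

variable {σ : Type*}

lemma latticeEval_apply (P : MvPolynomial σ ℝ) (x : σ → ℤ) :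
    latticeEval σ P x = eval (fun i => (x i : ℝ)) P := rfl

lemma latticeEval_injective : Function.Injective (latticeEval σ) := by
  intro P Q hPQ
  refine funext_set (fun _ => Set.range ((↑) : ℤ → ℝ))
    (fun _ => Set.infinite_range_of_injective Int.cast_injective) fun x hx => ?_
  choose z hz using fun i => hx i trivial
  obtain rfl : (fun i => (z i : ℝ)) = x := funext hz
  exact congrFun hPQ z

end LatticeEval

lemma isPolyDeg_latticeEval_monomial {k : ℕ} (m : Fin k →₀ ℕ) (c : ℝ) :
    IsPolyDeg k (m.sum fun _ e => e) (latticeEval (Fin k) (monomial m c)) := by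
  have hmon : latticeEval (Fin k) (monomial m c)
      = (fun _ => c) * ∏ i ∈ m.support, (fun x : Fin k → ℤ => (x i : ℝ)) ^ m i := by
    funext x
    simp [latticeEval_apply, eval_monomial, Finsupp.prod]
  rw [hmon]
  simpa [Finsupp.sum] using
    (isPolyDeg_const 0 c).mul (IsPolyDeg.prod m.support fun i _ => (isPolyDeg_coord i).pow (m i))

lemma isPolyDeg_latticeEval {k : ℕ} (P : MvPolynomial (Fin k) ℝ) :
    IsPolyDeg k P.totalDegree (latticeEval (Fin k) P) := by
  rw [← mem_polyDeg]
  conv => enter [2]; rw [P.as_sum, map_sum]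
  exact Submodule.sum_mem _ fun m hm =>
    (isPolyDeg_latticeEval_monomial m _).mono (le_totalDegree hm)

lemma IsPolyDeg.exists_newton_expansion {k d : ℕ} {f : (Fin (k + 1) → ℤ) → ℝ}
    (hf : IsPolyDeg (k + 1) d f) :
    ∃ h : ℕ → (Fin k → ℤ) → ℝ, (∀ n, IsPolyDeg k (d - n) (h n)) ∧
      ∀ x, f x = ∑ n ∈ range (d + 1), Ring.choose (x 0 : ℝ) n * h n (Fin.tail x) := by
  let E := Fin.consLinearEquiv ℤ fun _ : Fin (k + 1) => ℤ
  let ψ : (Fin k → ℤ) →+ (Fin (k + 1) → ℤ) :=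
    (E.toLinearMap ∘ₗ LinearMap.inr ℤ ℤ _).toAddMonoidHom
  let v := E (1, 0)
  refine ⟨fun n => (Δ_[v])^[n] f ∘ ψ, fun n => ?_, fun x => ?_⟩
  · show IsPolyDeg k (d - n) ((Δ_[v])^[n] f ∘ ψ)
    rw [← iterDeriv_replicate]
    simpa using (hf.iterDeriv (List.replicate n v)).comp_addMonoidHom ψ
  · have hx : x = ψ (Fin.tail x) + x 0 • v := by
      show x = E (0, Fin.tail x) + x 0 • E (1, 0)
      rw [← map_zsmul, ← map_add, Prod.smul_mk, Prod.mk_add_mk, smul_zero, add_zero, zero_add,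
        smul_eq_mul, mul_one]
      exact (Fin.cons_self_tail x).symm
    have hzero : (Δ_[v])^[d + 1] f = 0 := by
      rw [← iterDeriv_replicate]; exact hf _ (List.length_replicate ..)
    conv_lhs => rw [hx, shift_zsmul_eq_sum_choose_smul_fwdDiff_iter hzero]
    refine sum_congr rfl fun n _ => ?_
    rw [zsmul_eq_mul, ← eq_intCast (Int.castRingHom ℝ), Ring.map_choose, eq_intCast]
    rfl

theorem IsPolyDeg.exists_totalDegree_le_latticeEval_eq {k d : ℕ} {f : (Fin k → ℤ) → ℝ}
    (hf : IsPolyDeg k d f) :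
    ∃ P : MvPolynomial (Fin k) ℝ, P.totalDegree ≤ d ∧ latticeEval (Fin k) P = f := by
  induction k generalizing d with
  | zero =>
    refine ⟨C (f 0), (totalDegree_C (f 0)).trans_le (Nat.zero_le d), funext fun x => ?_⟩
    rw [latticeEval_apply, eval_C, Subsingleton.elim x 0]
  | succ k ih =>
    obtain ⟨h, hdeg, hexp⟩ := hf.exists_newton_expansion
    choose Q hQdeg hQ using fun n => ih (hdeg n)
    refine ⟨∑ n ∈ range (d + 1), Ring.choose (X 0) n * rename Fin.succ (Q n), ?_, ?_⟩
    · refine totalDegree_finsetSum_le fun n hn => (totalDegree_mul _ _).trans ?_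
      have := (totalDegree_rename_le Fin.succ (Q n)).trans (hQdeg n)
      have := totalDegree_choose_X_le (0 : Fin (k + 1)) n
      have := mem_range.mp hn
      omega
    · funext x
      simp only [hexp x, latticeEval_apply, map_sum, map_mul, Ring.map_choose, eval_X,
        eval_rename, ← hQ]
      rfl

lemma map_restrictTotalDegree_latticeEval (k d : ℕ) :
    (restrictTotalDegree (Fin k) ℝ d).map (latticeEval (Fin k)) = polyDeg k d := by
  ext f
  simp only [Submodule.mem_map, mem_restrictTotalDegree, mem_polyDeg]
  constructor
  · rintro ⟨P, hP, rfl⟩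
    exact (isPolyDeg_latticeEval P).mono hP
  · exact fun hf => hf.exists_totalDegree_le_latticeEval_eq

theorem stmt14_general (k d : ℕ) :
    (∀ f : (Fin k → ℤ) → ℝ, IsPolyDeg k d f →
        ∃! P : MvPolynomial (Fin k) ℝ, P.totalDegree ≤ d ∧
          ∀ x : Fin k → ℤ, f x = MvPolynomial.eval (fun i => (x i : ℝ)) P) ∧
      ∃ L : MvPolynomial.restrictTotalDegree (Fin k) ℝ d →ₗ[ℝ] ((Fin k → ℤ) → ℝ),
        (∀ (P : MvPolynomial.restrictTotalDegree (Fin k) ℝ d) (x : Fin k → ℤ),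
            L P x = MvPolynomial.eval (fun i => (x i : ℝ)) (P : MvPolynomial (Fin k) ℝ)) ∧
          Function.Injective L ∧
          Set.range L = {f : (Fin k → ℤ) → ℝ | IsPolyDeg k d f} := by
  refine ⟨fun f hf => ?_, (latticeEval (Fin k)).domRestrict _, fun P x => rfl,
    latticeEval_injective.comp Subtype.val_injective, ?_⟩
  · obtain ⟨P, hP, rfl⟩ := hf.exists_totalDegree_le_latticeEval_eq
    exact ⟨P, ⟨hP, fun x => rfl⟩,
      fun Q hQ => latticeEval_injective (funext fun x => (hQ.2 x).symm)⟩
  · rw [← LinearMap.coe_range, LinearMap.range_domRestrict, map_restrictTotalDegree_latticeEval]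
    rfl

/-- Every element of `𝒫^d(ℤ^k)` is the restriction to
`ℤ^k ⊆ ℝ^k` of a unique real polynomial in `k` variables of total degree at
most `d`; consequently restriction defines a linear isomorphism from the space
of real polynomial functions of total degree at most `d` onto `𝒫^d(ℤ^k)`. -/
theorem stmt14 (k d : ℕ) (hk : 1 ≤ k) :
    (∀ f : (Fin k → ℤ) → ℝ, IsPolyDeg k d f →
        ∃! P : MvPolynomial (Fin k) ℝ, P.totalDegree ≤ d ∧
          ∀ x : Fin k → ℤ, f x = MvPolynomial.eval (fun i => (x i : ℝ)) P) ∧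
      ∃ L : MvPolynomial.restrictTotalDegree (Fin k) ℝ d →ₗ[ℝ] ((Fin k → ℤ) → ℝ),
        (∀ (P : MvPolynomial.restrictTotalDegree (Fin k) ℝ d) (x : Fin k → ℤ),
            L P x = MvPolynomial.eval (fun i => (x i : ℝ)) (P : MvPolynomial (Fin k) ℝ)) ∧
          Function.Injective L ∧
          Set.range L = {f : (Fin k → ℤ) → ℝ | IsPolyDeg k d f} :=
  stmt14_general k d
end

section
/- For all real numbers C > 1, D > 0, and c₀ with 0 < c₀ < 1, there exist a real α > 0 and an integer k ≥ 2 such that (1−c₀)·e^{αD} < 1 and 1 < (1 + (1−c₀)^{k−2} · ((1−c₀)·e^{αD}) / (1 − (1−c₀)·e^{αD})) · e^{αkD} < C²/(C²−1). -/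
/-- For all reals `C > 1`, `D > 0`, and `0 < c₀ < 1`, there
exist `α > 0` and an integer `k ≥ 2` such that `(1−c₀)·e^{αD} < 1` and
`1 < (1 + (1−c₀)^{k−2}·((1−c₀)·e^{αD})/(1 − (1−c₀)·e^{αD}))·e^{αkD} < C²/(C²−1)`. -/
theorem stmt19 (C D c₀ : ℝ) (hC : 1 < C) (hD : 0 < D) (hc₀ : 0 < c₀) (hc₁ : c₀ < 1) :
    ∃ (α : ℝ) (k : ℕ), 0 < α ∧ 2 ≤ k ∧
      (1 - c₀) * Real.exp (α * D) < 1 ∧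
      1 < (1 + (1 - c₀) ^ (k - 2) * ((1 - c₀) * Real.exp (α * D))
              / (1 - (1 - c₀) * Real.exp (α * D))) * Real.exp (α * k * D) ∧
      (1 + (1 - c₀) ^ (k - 2) * ((1 - c₀) * Real.exp (α * D))
              / (1 - (1 - c₀) * Real.exp (α * D))) * Real.exp (α * k * D)
        < C ^ 2 / (C ^ 2 - 1) := by
  set q : ℝ := 1 - c₀ with hq
  have hq0 : 0 < q := by simp [hq]; linarith
  have hq1 : q < 1 := by simp [hq]; linarith
  -- target T
  set T : ℝ := C ^ 2 / (C ^ 2 - 1) with hT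
  have hC2 : 1 < C ^ 2 := by nlinarith
  have hT1 : 1 < T := by
    rw [hT, lt_div_iff₀ (by linarith)]; linarith
  -- choose n with q^(n+1) < c₀ * (T - 1)
  obtain ⟨n, hn⟩ : ∃ n : ℕ, q ^ n < c₀ * (T - 1) := by
    rcases exists_pow_lt_of_lt_one (mul_pos hc₀ (by linarith) : (0:ℝ) < c₀ * (T - 1)) hq1 with ⟨n, hn⟩
    exact ⟨n, hn⟩
  have hn1 : q ^ (n + 1) < c₀ * (T - 1) :=
    lt_of_le_of_lt (by
      calc q ^ (n + 1) = q ^ n * q := pow_succ q n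
        _ ≤ q ^ n * 1 := by nlinarith [pow_pos hq0 n]
        _ = q ^ n := by ring) hn
  set k : ℕ := n + 2 with hk
  -- the function of α
  set g : ℝ → ℝ := fun α =>
    (1 + q ^ n * (q * Real.exp (α * D)) / (1 - q * Real.exp (α * D))) *
      Real.exp (α * k * D) with hg
  have hcont : ContinuousAt g 0 := by
    have h1 : ContinuousAt (fun α : ℝ => q * Real.exp (α * D)) 0 := by fun_prop
    have hden : (1 - q * Real.exp (0 * D)) ≠ 0 := by
      rw [zero_mul, Real.exp_zero, mul_one]
      intro h; nlinarith
    apply ContinuousAt.mul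
    · apply ContinuousAt.add continuousAt_const
      apply ContinuousAt.div
      · fun_prop
      · fun_prop
      · exact hden
    · fun_prop
  have hg0 : g 0 < T := by
    have : g 0 = 1 + q ^ (n + 1) / c₀ := by
      have h1 : (1:ℝ) - q = c₀ := by rw [hq]; ring
      simp only [hg, zero_mul, Real.exp_zero, mul_one, h1, pow_succ]
    rw [this]
    rw [add_comm, ← lt_sub_iff_add_lt, div_lt_iff₀ hc₀]
    linarith [hn1]
  -- eventually in nhds 0: g α < T and q * exp(α D) < 1
  have hev : ∀ᶠ α in nhdsWithin 0 (Set.Ioi (0:ℝ)),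
      g α < T ∧ q * Real.exp (α * D) < 1 := by
    have h1 : ∀ᶠ α in nhds (0:ℝ), g α < T :=
      hcont.eventually_lt continuousAt_const hg0
    have hcont2 : ContinuousAt (fun α : ℝ => q * Real.exp (α * D)) 0 := by fun_prop
    have h2' : (fun α : ℝ => q * Real.exp (α * D)) 0 < 1 := by simpa using hq1
    have h2 : ∀ᶠ α in nhds (0:ℝ), q * Real.exp (α * D) < 1 :=
      hcont2.eventually_lt continuousAt_const h2'
    exact ((h1.and h2).filter_mono nhdsWithin_le_nhds)
  have hne : (nhdsWithin (0:ℝ) (Set.Ioi 0)).NeBot := nhdsGT_neBot 0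
  obtain ⟨α, hα⟩ := (hev.and self_mem_nhdsWithin).exists
  obtain ⟨⟨hgα, hx1⟩, hαpos⟩ := hα
  have hαpos : 0 < α := hαpos
  refine ⟨α, k, hαpos, by omega, hx1, ?_, ?_⟩
  · -- lower bound
    have hkn : k - 2 = n := by omega
    rw [hkn]
    have hnum : 0 ≤ q ^ n * (q * Real.exp (α * D)) / (1 - q * Real.exp (α * D)) := by
      apply div_nonneg
      · positivity
      · linarith
    have hexp : 1 < Real.exp (α * k * D) := by
      have : Real.exp 0 < Real.exp (α * k * D) :=
        Real.exp_lt_exp.mpr (by positivity)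
      simpa using this
    calc (1:ℝ) < Real.exp (α * k * D) := hexp
      _ ≤ (1 + q ^ n * (q * Real.exp (α * D)) / (1 - q * Real.exp (α * D))) *
            Real.exp (α * k * D) := by nlinarith [Real.exp_pos (α * k * D)]
  · have hkn : k - 2 = n := by omega
    rw [hkn]
    exact hgα
end
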